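/- Let R = ((ℓ_1,…,ℓ_d),(u_1,…,u_{d+1})) be a constructible special point data of level d with q nodes, with u_1, …, u_{d+1} listed in increasing lexicographic order, and let c be a rational number. Define b_j := ⌈(|a_{u_j}(R)| + c)/q − 1/2⌉ for j = 1,…,d+1. Then b_j ≤ b_{j+1} for every j = 1,…,d, and b_{d+1} ≤ b_1 + 1. -/

import Mathlib

/-- The relation `u <_ℓ u'` on `{1,2}^d`, relative to node labels `lab : Fin d → ℕ`. -/
def ltNode {d : ℕ} (lab : Fin d → ℕ) (ℓ : ℕ) (u u' : Fin d → ℕ) : Prop :=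
  (∃ k₀ : Fin d, lab k₀ = ℓ ∧ u k₀ = 2 ∧ u' k₀ = 1 ∧
      ∀ k : Fin d, k₀ < k → lab k = ℓ → u k = u' k) ∨
  ((∀ k : Fin d, lab k = ℓ → u k = u' k) ∧
    ∃ k₀ : Fin d, lab k₀ ≠ ℓ ∧ u k₀ = 1 ∧ u' k₀ = 2 ∧
      ∀ k : Fin d, k < k₀ → u k = u' k)

/-- Constructible special point data of level `d` with `q` nodes. -/
inductive Constructible (q : ℕ) :
    (d : ℕ) → (Fin d → ℕ) → (Fin (d + 1) → Fin d → ℕ) → Prop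
  | base (ℓ : ℕ) (h1 : 1 ≤ ℓ) (hq : ℓ ≤ q) :
      Constructible q 1 (fun _ => ℓ) ![![1], ![2]]
  | step {d : ℕ} {lab : Fin d → ℕ} {u : Fin (d + 1) → Fin d → ℕ}
      (hR : Constructible q d lab u) (ℓ : ℕ) (h1 : 1 ≤ ℓ) (hq : ℓ ≤ q)
      (v : Fin (d + 1) → Fin d → ℕ) (σ : Equiv.Perm (Fin (d + 1)))
      (hv : ∀ j, v j = u (σ j))
      (hsort : ∀ i j : Fin (d + 1), i < j → ltNode lab ℓ (v i) (v j))
      (h : ℕ) (hh1 : 1 ≤ h) (hh2 : h ≤ d + 1) :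
      Constructible q (d + 1) (Fin.snoc lab ℓ)
        (fun j : Fin (d + 2) =>
          if hj : (j : ℕ) < h then Fin.snoc (v ⟨(j : ℕ), by omega⟩) 1
          else Fin.snoc (v ⟨(j : ℕ) - 1, by omega⟩) 2)

/-- `a^ℓ_u(R)`: the number of `k` with `ℓ_k = ℓ` and `u(k) = 2`. -/
def aCount {d : ℕ} (lab : Fin d → ℕ) (ℓ : ℕ) (u : Fin d → ℕ) : ℕ :=
  (Finset.univ.filter (fun k : Fin d => lab k = ℓ ∧ u k = 2)).card

/-- `|a_u(R)|`: the number of `k` with `u(k) = 2`. -/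
def aTot {d : ℕ} (u : Fin d → ℕ) : ℕ :=
  (Finset.univ.filter (fun k : Fin d => u k = 2)).card

/-- Lexicographic order on tuples, comparing at the smallest coordinate where they differ. -/
def lexLt {d : ℕ} (u u' : Fin d → ℕ) : Prop :=
  ∃ k₀ : Fin d, (∀ k : Fin d, k < k₀ → u k = u' k) ∧ u k₀ < u' k₀

/-! For two tuples `x <lex y` of a constructible datum one has `|a_x| ≤ |a_y|` and, at every
node `ℓ`, `a^ℓ_y ≤ a^ℓ_x + 1`; summing the latter over the `q` nodes gives
`|a_{u_{d+1}}| ≤ |a_{u_1}| + q`, and both bounds pass through `t ↦ ⌈(t + c)/q - 1/2⌉`.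
These two bounds alone are not preserved when a coordinate is appended (`x·2 <lex y·1` needs
`|a_x| < |a_y|`), so they are proved by induction along the construction together with two
bounds involving the nodes `ℓ` at which `x` beats `y` in the sense of clause (i) of `<_ℓ`
(`nodeColexGt`): if `y <lex x`, then `|a_x| - |a_y|` is at least the number of such nodes, and
if `x <lex y`, then `a^ℓ_y ≤ a^ℓ_x` at each such node. -/

open Finset

section Lex

variable {d : ℕ}

lemma lexLt_irrefl (x : Fin d → ℕ) : ¬ lexLt x x := by
  rintro ⟨k, _, hk⟩
  exact hk.false

lemma lexLt_asymm {x y : Fin d → ℕ} (hxy : lexLt x y) (hyx : lexLt y x) : False := by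
  obtain ⟨k, hk, hlt⟩ := hxy
  obtain ⟨k', hk', hlt'⟩ := hyx
  rcases lt_trichotomy k k' with h | rfl | h
  · exact (hk' k h ▸ hlt).false
  · exact hlt.asymm hlt'
  · exact (hk k' h ▸ hlt').false

lemma lexLt.ne {x y : Fin d → ℕ} (h : lexLt x y) : x ≠ y := by
  rintro rfl
  exact lexLt_irrefl x h

lemma lexLt_snoc {x y : Fin d → ℕ} {a b : ℕ} :
    lexLt (Fin.snoc x a : Fin (d + 1) → ℕ) (Fin.snoc y b) ↔ lexLt x y ∨ (x = y ∧ a < b) := by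
  constructor
  · rintro ⟨k₀, hbefore, hlt⟩
    induction k₀ using Fin.lastCases with
    | last =>
      refine .inr ⟨funext fun k => ?_, by simpa using hlt⟩
      simpa using hbefore k.castSucc (Fin.castSucc_lt_last k)
    | cast k₀ =>
      refine .inl ⟨k₀, fun k hk => ?_, by simpa using hlt⟩
      simpa using hbefore k.castSucc (by simpa using hk)
  · rintro (⟨k₀, hbefore, hlt⟩ | ⟨rfl, hab⟩)
    · refine ⟨k₀.castSucc, fun k hk => ?_, by simpa using hlt⟩
      induction k using Fin.lastCases with
      | last => exact absurd hk (Fin.castSucc_lt_last k₀).asymm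
      | cast k => simpa using hbefore k (by simpa using hk)
    · refine ⟨Fin.last d, fun k hk => ?_, by simpa using hab⟩
      induction k using Fin.lastCases with
      | last => exact absurd hk (lt_irrefl _)
      | cast k => simp

lemma lexLt_of_lexLt_snoc {x y : Fin d → ℕ} {a b : ℕ} (hne : x ≠ y)
    (h : lexLt (Fin.snoc x a : Fin (d + 1) → ℕ) (Fin.snoc y b)) : lexLt x y :=
  (lexLt_snoc.mp h).resolve_right fun h => hne h.1

end Lex

section Count

variable {d : ℕ}

lemma aTot_snoc (x : Fin d → ℕ) (a : ℕ) :
    aTot (Fin.snoc x a : Fin (d + 1) → ℕ) = aTot x + if a = 2 then 1 else 0 := by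
  simp only [aTot, card_filter, Fin.sum_univ_castSucc, Fin.snoc_castSucc, Fin.snoc_last]

lemma aTot_snoc_one (x : Fin d → ℕ) : aTot (Fin.snoc x 1 : Fin (d + 1) → ℕ) = aTot x := by
  simp [aTot_snoc]

lemma aTot_snoc_two (x : Fin d → ℕ) : aTot (Fin.snoc x 2 : Fin (d + 1) → ℕ) = aTot x + 1 := by
  simp [aTot_snoc]

lemma aCount_snoc (lab : Fin d → ℕ) (ℓ ℓ' : ℕ) (x : Fin d → ℕ) (a : ℕ) :
    aCount (Fin.snoc lab ℓ : Fin (d + 1) → ℕ) ℓ' (Fin.snoc x a)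
      = aCount lab ℓ' x + if ℓ = ℓ' ∧ a = 2 then 1 else 0 := by
  simp only [aCount, card_filter, Fin.sum_univ_castSucc, Fin.snoc_castSucc, Fin.snoc_last]

lemma aCount_congr {lab : Fin d → ℕ} {ℓ : ℕ} {x y : Fin d → ℕ}
    (h : ∀ k, lab k = ℓ → x k = y k) : aCount lab ℓ x = aCount lab ℓ y := by
  unfold aCount
  congr 1
  exact filter_congr fun k _ => and_congr_right fun hk => by rw [h k hk]

lemma aTot_eq_sum_aCount {lab : Fin d → ℕ} {s : Finset ℕ} (hlab : ∀ k, lab k ∈ s)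
    (x : Fin d → ℕ) : aTot x = ∑ ℓ ∈ s, aCount lab ℓ x := by
  rw [aTot, card_eq_sum_card_fiberwise fun k _ => hlab k]
  simp only [aCount, filter_filter, and_comm]

lemma aTot_le_add_card {lab : Fin d → ℕ} {s : Finset ℕ} (hlab : ∀ k, lab k ∈ s)
    {x y : Fin d → ℕ} (h : ∀ ℓ, aCount lab ℓ y ≤ aCount lab ℓ x + 1) :
    aTot y ≤ aTot x + #s := by
  rw [aTot_eq_sum_aCount hlab, aTot_eq_sum_aCount hlab, card_eq_sum_ones, ← sum_add_distrib]
  exact sum_le_sum fun ℓ _ => h ℓ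

end Count

section Colex

variable {d : ℕ}

def nodeColexGt (lab : Fin d → ℕ) (ℓ : ℕ) (x y : Fin d → ℕ) : Prop :=
  ∃ k₀ : Fin d, lab k₀ = ℓ ∧ x k₀ = 2 ∧ y k₀ = 1 ∧
    ∀ k : Fin d, k₀ < k → lab k = ℓ → x k = y k

lemma nodeColexGt_irrefl (lab : Fin d → ℕ) (ℓ : ℕ) (x : Fin d → ℕ) : ¬ nodeColexGt lab ℓ x x := by
  rintro ⟨k, _, h2, h1, _⟩
  omega

lemma nodeColexGt.ne {lab : Fin d → ℕ} {ℓ : ℕ} {x y : Fin d → ℕ} (h : nodeColexGt lab ℓ x y) :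
    x ≠ y := by
  rintro rfl
  exact nodeColexGt_irrefl lab ℓ x h

lemma nodeColexGt_snoc_of_ne {lab : Fin d → ℕ} {ℓ ℓ' : ℕ} (hne : ℓ' ≠ ℓ)
    (x y : Fin d → ℕ) (a b : ℕ) :
    nodeColexGt (Fin.snoc lab ℓ : Fin (d + 1) → ℕ) ℓ' (Fin.snoc x a) (Fin.snoc y b) ↔
      nodeColexGt lab ℓ' x y := by
  constructor
  · rintro ⟨k₀, hk₀, h2, h1, hafter⟩
    induction k₀ using Fin.lastCases with
    | last => exact absurd (by simpa using hk₀) hne.symm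
    | cast k₀ =>
      refine ⟨k₀, by simpa using hk₀, by simpa using h2, by simpa using h1, fun k hk hl => ?_⟩
      simpa using hafter k.castSucc (by simpa using hk) (by simpa using hl)
  · rintro ⟨k₀, hk₀, h2, h1, hafter⟩
    refine ⟨k₀.castSucc, by simpa using hk₀, by simpa using h2, by simpa using h1,
      fun k hk hl => ?_⟩
    induction k using Fin.lastCases with
    | last => exact absurd (by simpa using hl) hne.symm
    | cast k => simpa using hafter k (by simpa using hk) (by simpa using hl)

lemma nodeColexGt_snoc_self {lab : Fin d → ℕ} {ℓ : ℕ} (x y : Fin d → ℕ) (a b : ℕ) :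
    nodeColexGt (Fin.snoc lab ℓ : Fin (d + 1) → ℕ) ℓ (Fin.snoc x a) (Fin.snoc y b) ↔
      (a = 2 ∧ b = 1) ∨ (a = b ∧ nodeColexGt lab ℓ x y) := by
  constructor
  · rintro ⟨k₀, hk₀, h2, h1, hafter⟩
    induction k₀ using Fin.lastCases with
    | last => exact .inl ⟨by simpa using h2, by simpa using h1⟩
    | cast k₀ =>
      refine .inr ⟨by simpa using hafter (Fin.last d) (Fin.castSucc_lt_last k₀) (by simp),
        k₀, by simpa using hk₀, by simpa using h2, by simpa using h1, fun k hk hl => ?_⟩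
      simpa using hafter k.castSucc (by simpa using hk) (by simpa using hl)
  · rintro (⟨rfl, rfl⟩ | ⟨rfl, k₀, hk₀, h2, h1, hafter⟩)
    · exact ⟨Fin.last d, by simp, by simp, by simp,
        fun k hk _ => absurd hk (Fin.le_last k).not_gt⟩
    · refine ⟨k₀.castSucc, by simpa using hk₀, by simpa using h2, by simpa using h1,
        fun k hk hl => ?_⟩
      induction k using Fin.lastCases with
      | last => simp
      | cast k => simpa using hafter k (by simpa using hk) (by simpa using hl)

lemma ltNode.nodeColexGt_or_lexLt {lab : Fin d → ℕ} {ℓ : ℕ} {x y : Fin d → ℕ}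
    (h : ltNode lab ℓ x y) :
    nodeColexGt lab ℓ x y ∨ ((∀ k, lab k = ℓ → x k = y k) ∧ lexLt x y) := by
  rcases h with h | ⟨heq, k₀, _, h1, h2, hbefore⟩
  · exact .inl h
  · exact .inr ⟨heq, k₀, hbefore, by omega⟩

open Classical in
noncomputable def numColexGtNodes (s : Finset ℕ) (lab : Fin d → ℕ) (x y : Fin d → ℕ) : ℕ :=
  #{ℓ ∈ s | nodeColexGt lab ℓ x y}

variable {s : Finset ℕ} {lab : Fin d → ℕ} {ℓ : ℕ}

lemma one_le_numColexGtNodes {x y : Fin d → ℕ} (hℓ : ℓ ∈ s) (h : nodeColexGt lab ℓ x y) :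
    1 ≤ numColexGtNodes s lab x y := by
  classical
  exact card_pos.mpr ⟨ℓ, mem_filter.mpr ⟨hℓ, h⟩⟩

lemma numColexGtNodes_self (x : Fin d → ℕ) : numColexGtNodes s lab x x = 0 := by
  classical
  simp [numColexGtNodes, nodeColexGt_irrefl]

lemma numColexGtNodes_snoc_same (x y : Fin d → ℕ) (e : ℕ) :
    numColexGtNodes s (Fin.snoc lab ℓ) (Fin.snoc x e) (Fin.snoc y e)
      = numColexGtNodes s lab x y := by
  classical
  unfold numColexGtNodes
  congr 1
  refine filter_congr fun ℓ' _ => ?_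
  rcases eq_or_ne ℓ' ℓ with rfl | hne
  · rw [nodeColexGt_snoc_self, or_iff_right (by omega), and_iff_right rfl]
  · exact nodeColexGt_snoc_of_ne hne x y e e

lemma numColexGtNodes_snoc_two_one_le (x y : Fin d → ℕ) :
    numColexGtNodes s (Fin.snoc lab ℓ) (Fin.snoc x 2) (Fin.snoc y 1)
      ≤ numColexGtNodes s lab x y + 1 := by
  classical
  refine (card_le_card fun ℓ' hℓ' => ?_).trans (card_insert_le ℓ _)
  rw [mem_filter] at hℓ'
  rcases eq_or_ne ℓ' ℓ with rfl | hne
  · exact mem_insert_self _ _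
  · exact mem_insert_of_mem
      (mem_filter.mpr ⟨hℓ'.1, (nodeColexGt_snoc_of_ne hne x y 2 1).mp hℓ'.2⟩)

lemma numColexGtNodes_snoc_one_two_add_one_le {x y : Fin d → ℕ} (hℓ : ℓ ∈ s)
    (h : nodeColexGt lab ℓ x y) :
    numColexGtNodes s (Fin.snoc lab ℓ) (Fin.snoc x 1) (Fin.snoc y 2) + 1
      ≤ numColexGtNodes s lab x y := by
  classical
  have hmem : ℓ ∈ ({ℓ' ∈ s | nodeColexGt lab ℓ' x y} : Finset ℕ) := mem_filter.mpr ⟨hℓ, h⟩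
  rw [numColexGtNodes, numColexGtNodes, ← card_erase_add_one hmem, add_le_add_iff_right]
  refine card_le_card fun ℓ' hℓ' => ?_
  rw [mem_filter] at hℓ'
  rcases eq_or_ne ℓ' ℓ with rfl | hne
  · rw [nodeColexGt_snoc_self] at hℓ'
    omega
  · exact mem_erase.mpr
      ⟨hne, mem_filter.mpr ⟨hℓ'.1, (nodeColexGt_snoc_of_ne hne x y 1 2).mp hℓ'.2⟩⟩

end Colex

structure PairBound (s : Finset ℕ) {d : ℕ} (lab : Fin d → ℕ) (x y : Fin d → ℕ) : Prop where
  aTot_le : lexLt x y → aTot x ≤ aTot y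
  aCount_le_succ : lexLt x y → ∀ ℓ, aCount lab ℓ y ≤ aCount lab ℓ x + 1
  aTot_add_le : lexLt y x → aTot y + numColexGtNodes s lab x y ≤ aTot x
  aCount_le_of_nodeColexGt : ∀ ℓ, nodeColexGt lab ℓ x y → lexLt x y →
    aCount lab ℓ y ≤ aCount lab ℓ x

namespace PairBound

variable {s : Finset ℕ} {d : ℕ} {lab : Fin d → ℕ} {ℓ : ℕ} {a b : Fin d → ℕ} {e₁ e₂ : ℕ}

lemma refl (x : Fin d → ℕ) : PairBound s lab x x where
  aTot_le h := absurd h (lexLt_irrefl x)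
  aCount_le_succ h := absurd h (lexLt_irrefl x)
  aTot_add_le h := absurd h (lexLt_irrefl x)
  aCount_le_of_nodeColexGt _ _ h := absurd h (lexLt_irrefl x)

lemma aTot_le_snoc (hℓ : ℓ ∈ s) (he₁ : e₁ = 1 ∨ e₁ = 2) (he₂ : e₂ = 1 ∨ e₂ = 2)
    (hab : PairBound s lab a b) (hba : PairBound s lab b a)
    (hord : e₁ = 2 → e₂ = 1 → a ≠ b → ltNode lab ℓ b a)
    (h : lexLt (Fin.snoc a e₁ : Fin (d + 1) → ℕ) (Fin.snoc b e₂)) :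
    aTot (Fin.snoc a e₁ : Fin (d + 1) → ℕ) ≤ aTot (Fin.snoc b e₂) := by
  simp only [aTot_snoc]
  rcases lexLt_snoc.mp h with hlt | ⟨rfl, he⟩
  · have hle := hab.aTot_le hlt
    have hstrict : e₁ = 2 → e₂ = 1 → aTot a + 1 ≤ aTot b := by
      rintro rfl rfl
      rcases (hord rfl rfl hlt.ne).nodeColexGt_or_lexLt with hgt | ⟨-, hba'⟩
      · have := hba.aTot_add_le hlt
        have := one_le_numColexGtNodes hℓ hgt
        omega
      · exact (lexLt_asymm hlt hba').elim
    split_ifs <;> omega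
  · split_ifs <;> omega

lemma aCount_le_succ_snoc (he₁ : e₁ = 1 ∨ e₁ = 2) (hab : PairBound s lab a b)
    (hord : e₁ = 1 → e₂ = 2 → a ≠ b → ltNode lab ℓ a b)
    (h : lexLt (Fin.snoc a e₁ : Fin (d + 1) → ℕ) (Fin.snoc b e₂)) (ℓ' : ℕ) :
    aCount (Fin.snoc lab ℓ) ℓ' (Fin.snoc b e₂ : Fin (d + 1) → ℕ)
      ≤ aCount (Fin.snoc lab ℓ) ℓ' (Fin.snoc a e₁ : Fin (d + 1) → ℕ) + 1 := by
  simp only [aCount_snoc]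
  rcases lexLt_snoc.mp h with hlt | ⟨rfl, he⟩
  · have hle := hab.aCount_le_succ hlt ℓ'
    have hkey : e₁ = 1 → e₂ = 2 → ℓ = ℓ' → aCount lab ℓ' b ≤ aCount lab ℓ' a := by
      rintro rfl rfl rfl
      rcases (hord rfl rfl hlt.ne).nodeColexGt_or_lexLt with hgt | ⟨heq, -⟩
      · exact hab.aCount_le_of_nodeColexGt ℓ hgt hlt
      · exact (aCount_congr heq).ge
    split_ifs <;> omega
  · split_ifs <;> omega

lemma aTot_add_le_snoc (hℓ : ℓ ∈ s) (he₁ : e₁ = 1 ∨ e₁ = 2) (he₂ : e₂ = 1 ∨ e₂ = 2)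
    (hab : PairBound s lab a b) (hord : e₁ = 1 → e₂ = 2 → a ≠ b → ltNode lab ℓ a b)
    (h : lexLt (Fin.snoc b e₂ : Fin (d + 1) → ℕ) (Fin.snoc a e₁)) :
    aTot (Fin.snoc b e₂ : Fin (d + 1) → ℕ)
        + numColexGtNodes s (Fin.snoc lab ℓ) (Fin.snoc a e₁) (Fin.snoc b e₂)
      ≤ aTot (Fin.snoc a e₁ : Fin (d + 1) → ℕ) := by
  rcases lexLt_snoc.mp h with hlt | ⟨rfl, he⟩
  · have hle := hab.aTot_add_le hlt
    rcases he₁ with rfl | rfl <;> rcases he₂ with rfl | rfl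
    · rw [aTot_snoc_one, aTot_snoc_one, numColexGtNodes_snoc_same]
      exact hle
    · rcases (hord rfl rfl hlt.ne.symm).nodeColexGt_or_lexLt with hgt | ⟨-, hab'⟩
      · have := numColexGtNodes_snoc_one_two_add_one_le hℓ hgt
        rw [aTot_snoc_one, aTot_snoc_two]
        omega
      · exact (lexLt_asymm hlt hab').elim
    · have := numColexGtNodes_snoc_two_one_le (s := s) (lab := lab) (ℓ := ℓ) a b
      rw [aTot_snoc_one, aTot_snoc_two]
      omega
    · rw [aTot_snoc_two, aTot_snoc_two, numColexGtNodes_snoc_same]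
      omega
  · obtain ⟨rfl, rfl⟩ : e₁ = 2 ∧ e₂ = 1 := by omega
    have := numColexGtNodes_snoc_two_one_le (s := s) (lab := lab) (ℓ := ℓ) b b
    rw [numColexGtNodes_self] at this
    rw [aTot_snoc_one, aTot_snoc_two]
    omega

lemma aCount_le_of_nodeColexGt_snoc (hab : PairBound s lab a b) (ℓ' : ℕ)
    (hgt : nodeColexGt (Fin.snoc lab ℓ : Fin (d + 1) → ℕ) ℓ' (Fin.snoc a e₁) (Fin.snoc b e₂))
    (h : lexLt (Fin.snoc a e₁ : Fin (d + 1) → ℕ) (Fin.snoc b e₂)) :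
    aCount (Fin.snoc lab ℓ) ℓ' (Fin.snoc b e₂ : Fin (d + 1) → ℕ)
      ≤ aCount (Fin.snoc lab ℓ) ℓ' (Fin.snoc a e₁ : Fin (d + 1) → ℕ) := by
  simp only [aCount_snoc]
  rcases eq_or_ne ℓ' ℓ with rfl | hne
  · rcases (nodeColexGt_snoc_self a b e₁ e₂).mp hgt with ⟨rfl, rfl⟩ | ⟨rfl, hgt'⟩
    · have hlt : lexLt a b := (lexLt_snoc.mp h).resolve_right (by omega)
      have := hab.aCount_le_succ hlt ℓ'
      split_ifs <;> omega
    · have := hab.aCount_le_of_nodeColexGt ℓ' hgt' (lexLt_of_lexLt_snoc hgt'.ne h)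
      split_ifs <;> omega
  · have hgt' := (nodeColexGt_snoc_of_ne hne a b e₁ e₂).mp hgt
    have := hab.aCount_le_of_nodeColexGt ℓ' hgt' (lexLt_of_lexLt_snoc hgt'.ne h)
    split_ifs <;> omega

lemma snoc (hℓ : ℓ ∈ s) (he₁ : e₁ = 1 ∨ e₁ = 2) (he₂ : e₂ = 1 ∨ e₂ = 2)
    (hab : PairBound s lab a b) (hba : PairBound s lab b a)
    (hord₁₂ : e₁ = 1 → e₂ = 2 → a ≠ b → ltNode lab ℓ a b)
    (hord₂₁ : e₁ = 2 → e₂ = 1 → a ≠ b → ltNode lab ℓ b a) :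
    PairBound s (Fin.snoc lab ℓ) (Fin.snoc a e₁) (Fin.snoc b e₂) where
  aTot_le := aTot_le_snoc hℓ he₁ he₂ hab hba hord₂₁
  aCount_le_succ := aCount_le_succ_snoc he₁ hab hord₁₂
  aTot_add_le := aTot_add_le_snoc hℓ he₁ he₂ hab hord₁₂
  aCount_le_of_nodeColexGt := aCount_le_of_nodeColexGt_snoc hab

lemma snoc_of_sorted {n : ℕ} {v : Fin n → Fin d → ℕ} (hℓ : ℓ ∈ s)
    (hv : ∀ i j, PairBound s lab (v i) (v j))
    (hsort : ∀ i j, i < j → ltNode lab ℓ (v i) (v j))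
    {i j : Fin n} (he₁ : e₁ = 1 ∨ e₁ = 2) (he₂ : e₂ = 1 ∨ e₂ = 2)
    (hij : e₁ = 1 → e₂ = 2 → i ≤ j) (hji : e₁ = 2 → e₂ = 1 → j ≤ i) :
    PairBound s (Fin.snoc lab ℓ) (Fin.snoc (v i) e₁) (Fin.snoc (v j) e₂) :=
  snoc hℓ he₁ he₂ (hv i j) (hv j i)
    (fun h₁ h₂ hne => hsort i j ((hij h₁ h₂).lt_of_ne fun h => hne (h ▸ rfl)))
    (fun h₁ h₂ hne => hsort j i ((hji h₁ h₂).lt_of_ne fun h => hne (h ▸ rfl)))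

end PairBound

lemma exists_snoc_eq_dite {d h : ℕ} (v : Fin (d + 1) → Fin d → ℕ) (hh : h ≤ d + 1)
    (j : Fin (d + 2)) :
    ∃ (i : Fin (d + 1)) (e : ℕ), (e = 1 ∧ (i : ℕ) < h ∨ e = 2 ∧ h ≤ (i : ℕ) + 1) ∧
      (if hj : (j : ℕ) < h then Fin.snoc (v ⟨(j : ℕ), by omega⟩) 1
        else Fin.snoc (v ⟨(j : ℕ) - 1, by omega⟩) 2 : Fin (d + 1) → ℕ)
        = Fin.snoc (v i) e := by
  by_cases hj : (j : ℕ) < h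
  · exact ⟨_, 1, .inl ⟨rfl, hj⟩, dif_pos hj⟩
  · exact ⟨_, 2, .inr ⟨rfl, by simp only; omega⟩, dif_neg hj⟩

namespace Constructible

variable {q d : ℕ} {lab : Fin d → ℕ} {u : Fin (d + 1) → Fin d → ℕ}

lemma label_mem (hR : Constructible q d lab u) (k : Fin d) : lab k ∈ Icc 1 q := by
  induction hR with
  | base ℓ h1 hq => exact mem_Icc.mpr ⟨h1, hq⟩
  | step _ ℓ h1 hq _ _ _ _ _ _ _ ih =>
    induction k using Fin.lastCases with
    | last => simpa using mem_Icc.mpr ⟨h1, hq⟩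
    | cast k => simpa using ih k

lemma pairBound (hR : Constructible q d lab u) (i j : Fin (d + 1)) :
    PairBound (Icc 1 q) lab (u i) (u j) := by
  induction hR with
  | base ℓ h1 hq =>
    -- the base datum is the construction step applied to the empty datum of level 0
    have hlab : (fun _ : Fin 1 => ℓ) = Fin.snoc (Fin.elim0 : Fin 0 → ℕ) ℓ :=
      funext fun k => by fin_cases k; rfl
    have hu : ∀ i : Fin 2, (![![1], ![2]] : Fin 2 → Fin 1 → ℕ) i
        = Fin.snoc (Fin.elim0 : Fin 0 → ℕ) ((i : ℕ) + 1) := by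
      intro i; fin_cases i <;> ext k <;> fin_cases k <;> rfl
    rw [hlab, hu, hu]
    exact PairBound.snoc (mem_Icc.mpr ⟨h1, hq⟩) (by omega) (by omega) (.refl _) (.refl _)
      (fun _ _ hne => (hne (Subsingleton.elim _ _)).elim)
      (fun _ _ hne => (hne (Subsingleton.elim _ _)).elim)
  | step _ ℓ h1 hq v σ hv hsort h _ hh ih =>
    obtain ⟨i', e₁, hi', hi⟩ := exists_snoc_eq_dite v hh i
    obtain ⟨j', e₂, hj', hj⟩ := exists_snoc_eq_dite v hh j
    beta_reduce
    rw [hi, hj]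
    refine PairBound.snoc_of_sorted (mem_Icc.mpr ⟨h1, hq⟩) (fun i j => ?_) hsort
      (by omega) (by omega) (fun _ _ => ?_) (fun _ _ => ?_)
    · rw [hv, hv]
      exact ih _ _
    all_goals rw [Fin.le_def]; omega

end Constructible

lemma ceil_div_sub_le_add_one {K : Type*} [Field K] [LinearOrder K] [IsStrictOrderedRing K]
    [FloorRing K] {q x y : K} (hq : 0 < q) (c r : K) (h : y ≤ x + q) :
    ⌈(y + c) / q - r⌉ ≤ ⌈(x + c) / q - r⌉ + 1 := by
  rw [← Int.ceil_add_one]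
  refine Int.ceil_mono ?_
  have : (y + c) / q ≤ (x + c) / q + 1 := by
    rw [div_add_one hq.ne', div_le_div_iff_of_pos_right hq]
    linarith
  linarith

/-- For a constructible special point data with tuples listed in increasing lexicographic
order and any rational `c`, the quantities `b_j = ⌈(|a_{u_j}(R)| + c)/q − 1/2⌉` are
nondecreasing in `j` and satisfy `b_{d+1} ≤ b_1 + 1`. -/
theorem constructible_b_mono {q d : ℕ} (hq : 1 ≤ q) (hd : 1 ≤ d)
    {lab : Fin d → ℕ} {u : Fin (d + 1) → Fin d → ℕ}
    (hR : Constructible q d lab u)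
    (hlex : ∀ i j : Fin (d + 1), i < j → lexLt (u i) (u j))
    (c : ℚ) (b : Fin (d + 1) → ℤ)
    (hb : ∀ j : Fin (d + 1), b j = ⌈((aTot (u j) : ℚ) + c) / (q : ℚ) - 1 / 2⌉) :
    (∀ j : Fin d, b j.castSucc ≤ b j.succ) ∧ b (Fin.last d) ≤ b 0 + 1 := by
  have hq₀ : (0 : ℚ) < q := by exact_mod_cast hq
  have hpair := hR.pairBound
  refine ⟨fun j => ?_, ?_⟩
  · have hle := (hpair _ _).aTot_le (hlex _ _ j.castSucc_lt_succ)
    rw [hb, hb]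
    gcongr
  · have h0 : (0 : Fin (d + 1)) < Fin.last d := Fin.lt_def.mpr hd
    have hspread : aTot (u (Fin.last d)) ≤ aTot (u 0) + q := by
      simpa using aTot_le_add_card hR.label_mem ((hpair _ _).aCount_le_succ (hlex _ _ h0))
    rw [hb, hb]
    exact ceil_div_sub_le_add_one hq₀ c _ (by exact_mod_cast hspread)
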